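/- Let κ = 1/√5 and for σ > 1 set σ₁ = (1 + √(1+4σ²))/2. For real β with 0 ≤ β ≤ 1 and σ > 1, define F₀(x, β) = 1/(x − β) + 1/(x − 1 + β). Then F₀(σ, β) − κ·F₀(σ₁, β) ≥ 1/(σ − β). -/
import Mathlib


open Real

theorem stmt_11 (σ β : ℝ) (hσ : 1 < σ) (hβ₀ : 0 ≤ β) (hβ₁ : β ≤ 1) :
    (1 / (σ - β) + 1 / (σ - 1 + β))
      - (1 / Real.sqrt 5) *
        (1 / ((1 + Real.sqrt (1 + 4 * σ ^ 2)) / 2 - β)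
          + 1 / ((1 + Real.sqrt (1 + 4 * σ ^ 2)) / 2 - 1 + β))
      ≥ 1 / (σ - β) := by
  set s := Real.sqrt (1 + 4 * σ ^ 2) with hs
  have hs2 : s ^ 2 = 1 + 4 * σ ^ 2 := Real.sq_sqrt (by nlinarith)
  have hsgt : 2 < s := by nlinarith [Real.sqrt_nonneg (1 + 4 * σ ^ 2)]
  have h5 : (0:ℝ) < Real.sqrt 5 := Real.sqrt_pos.mpr (by norm_num)
  have h52 : Real.sqrt 5 ^ 2 = 5 := Real.sq_sqrt (by norm_num)
  have hd1 : 0 < (1 + s) / 2 - β := by linarith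
  have hd2 : 0 < (1 + s) / 2 - 1 + β := by linarith
  have hd3 : 0 < σ - 1 + β := by linarith
  have hA : ((1 + s) / 2 - β) * ((1 + s) / 2 - 1 + β) = σ ^ 2 + β - β ^ 2 := by
    linear_combination (1/4) * hs2
  have hD : (0:ℝ) < σ ^ 2 + β - β ^ 2 := by nlinarith
  have key : (1 / Real.sqrt 5) * (1 / ((1 + s) / 2 - β) + 1 / ((1 + s) / 2 - 1 + β))
      ≤ 1 / (σ - 1 + β) := by
    rw [div_add_div _ _ (ne_of_gt hd1) (ne_of_gt hd2), hA,
      show (1 * ((1 + s) / 2 - 1 + β) + ((1 + s) / 2 - β) * 1) = s by ring,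
      div_mul_div_comm, div_le_div_iff₀ (by positivity) hd3]
    have hmid : s ≤ Real.sqrt 5 * σ := by
      rw [hs, show Real.sqrt 5 * σ = Real.sqrt (5 * σ ^ 2) by
        rw [show (5:ℝ) * σ ^ 2 = 5 * σ ^ 2 from rfl, Real.sqrt_mul (by norm_num),
          Real.sqrt_sq (by linarith)]]
      exact Real.sqrt_le_sqrt (by nlinarith)
    nlinarith [mul_le_mul_of_nonneg_right hmid (le_of_lt hd3),
      mul_nonneg (le_of_lt h5) (mul_nonneg (by linarith : (0:ℝ) ≤ 1 - β) (by linarith : (0:ℝ) ≤ σ + β))]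
  linarith
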